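/- arXiv:2205.03995 — 2 statements merged into one kernel-verified Lean document; each statement's English description precedes it below -/
import Mathlib

section
/- Let G be a finite simple graph and let X be the number of crossings of a uniformly random embedding of G on points in convex position. Then E[X] = m_2(G)/3, where m_2(G) is the number of 2-matchings of G. -/
open Finset

namespace RandomCrossings

/-- `z` lies strictly between `x` and `y`. -/
def Btw {n : ℕ} (x y z : Fin n) : Prop := min x y < z ∧ z < max x y

instance {n : ℕ} (x y z : Fin n) : Decidable (Btw x y z) :=
  inferInstanceAs (Decidable (_ ∧ _))

/-- The pair of edges `s` forms a crossing under the embedding `π`: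
there is a labelling of `s` as `{{a,b},{c,d}}` such that exactly one of
`π c`, `π d` lies strictly between `π a` and `π b`. -/
def IsCrossing {n : ℕ} (π : Equiv.Perm (Fin n)) (s : Finset (Sym2 (Fin n))) : Prop :=
  ∃ a b c d : Fin n,
    s = {Sym2.mk a b, Sym2.mk c d} ∧
      Xor' (Btw (π a) (π b) (π c)) (Btw (π a) (π b) (π d))

instance {n : ℕ} (π : Equiv.Perm (Fin n)) (s : Finset (Sym2 (Fin n))) :
    Decidable (IsCrossing π s) :=
  by unfold IsCrossing Xor'; infer_instance

/-- The set of `r`-matchings of `G`: sets of `r` pairwise vertex-disjoint edges. -/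
def matchings {n : ℕ} (G : SimpleGraph (Fin n)) [DecidableRel G.Adj] (r : ℕ) :
    Finset (Finset (Sym2 (Fin n))) :=
  (G.edgeFinset.powersetCard r).filter
    (fun s => ∀ e ∈ s, ∀ f ∈ s, e ≠ f → ∀ v : Fin n, ¬(v ∈ e ∧ v ∈ f))

/-- `mMatch G r` is the number of `r`-matchings of `G`. -/
def mMatch {n : ℕ} (G : SimpleGraph (Fin n)) [DecidableRel G.Adj] (r : ℕ) : ℕ :=
  (matchings G r).card

/-- The number of crossings of the embedding of `G` given by the permutation `π`. -/
def crossingNumber {n : ℕ} (G : SimpleGraph (Fin n)) [DecidableRel G.Adj]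
    (π : Equiv.Perm (Fin n)) : ℕ :=
  ((matchings G 2).filter (fun s => IsCrossing π s)).card

/-- Probability of an event under a uniformly random permutation of `Fin n`. -/
noncomputable def prob {n : ℕ} (p : Equiv.Perm (Fin n) → Prop) : ℝ := by
  classical
  exact ((Finset.univ.filter p).card : ℝ) / (Fintype.card (Equiv.Perm (Fin n)) : ℝ)

/-- Expectation of a real random variable of a uniformly random permutation of `Fin n`. -/
noncomputable def expect {n : ℕ} (f : Equiv.Perm (Fin n) → ℝ) : ℝ :=
  (∑ π : Equiv.Perm (Fin n), f π) / (Fintype.card (Equiv.Perm (Fin n)) : ℝ)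

/-- The mean number of crossings of a uniformly random embedding of `G`. -/
noncomputable def meanX {n : ℕ} (G : SimpleGraph (Fin n)) [DecidableRel G.Adj] : ℝ :=
  expect (fun π => (crossingNumber G π : ℝ))

/-- The variance of the number of crossings of a uniformly random embedding of `G`. -/
noncomputable def varX {n : ℕ} (G : SimpleGraph (Fin n)) [DecidableRel G.Adj] : ℝ :=
  expect (fun π => ((crossingNumber G π : ℝ) - meanX G) ^ 2)

/-- The standard normal cumulative distribution function. -/
noncomputable def Phi (z : ℝ) : ℝ :=
  ((ProbabilityTheory.gaussianReal 0 1) (Set.Iic z)).toReal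

/-- Kolmogorov distance between a random variable of a uniform permutation and
a standard Gaussian. -/
noncomputable def dKol {n : ℕ} (W : Equiv.Perm (Fin n) → ℝ) : ℝ :=
  ⨆ z : ℝ, |prob (fun π => W π ≤ z) - Phi z|

/-!
Fix a 2-matching `{ab, cd}`. Precomposing the embedding with the 3-cycle `b ↦ c ↦ d ↦ b` runs
through the three ways `{ab, cd}`, `{ac, db}`, `{ad, bc}` of pairing the images of `a, b, c, d`
into two chords, and of four distinct points on a line exactly one such pairing crosses. So every
2-matching crosses for exactly a third of all permutations, and summing over 2-matchings gives
`E[X] = m₂(G) / 3`.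
-/

lemma btw_iff_val {n : ℕ} (x y z : Fin n) :
    Btw x y z ↔ min x.val y.val < z.val ∧ z.val < max x.val y.val := by
  rw [Btw, Fin.lt_def, Fin.lt_def, Fin.coe_min, Fin.coe_max]

def Separates {n : ℕ} (x y z w : Fin n) : Prop := Xor (Btw x y z) (Btw x y w)

instance {n : ℕ} (x y z w : Fin n) : Decidable (Separates x y z w) :=
  inferInstanceAs (Decidable (Xor _ _))

lemma separates_iff_val {n : ℕ} (x y z w : Fin n) :
    Separates x y z w ↔ Xor (min x.val y.val < z.val ∧ z.val < max x.val y.val)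
      (min x.val y.val < w.val ∧ w.val < max x.val y.val) := by
  rw [Separates, btw_iff_val, btw_iff_val]

lemma separates_congr {n : ℕ} {x y z w x' y' z' w' : Fin n}
    (hxy : s(x, y) = s(x', y')) (hzw : s(z, w) = s(z', w')) :
    Separates x y z w ↔ Separates x' y' z' w' := by
  rcases Sym2.eq_iff.mp hxy with ⟨rfl, rfl⟩ | ⟨rfl, rfl⟩ <;>
    rcases Sym2.eq_iff.mp hzw with ⟨rfl, rfl⟩ | ⟨rfl, rfl⟩ <;>
    simp only [Separates, Btw, min_comm, max_comm] <;> rw [xor_comm]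

lemma separates_comm {n : ℕ} {x y z w : Fin n}
    (hxz : x ≠ z) (hxw : x ≠ w) (hyz : y ≠ z) (hyw : y ≠ w) :
    Separates x y z w ↔ Separates z w x y := by
  simp only [separates_iff_val, xor_def, ← Fin.val_ne_iff] at *
  omega

lemma separates_trichotomy {n : ℕ} {x y z w : Fin n}
    (hxy : x ≠ y) (hxz : x ≠ z) (hxw : x ≠ w) (hyz : y ≠ z) (hyw : y ≠ w)
    (hzw : z ≠ w) :
    ((if Separates x y z w then 1 else 0) + (if Separates x z w y then 1 else 0) +
      (if Separates x w y z then 1 else 0) : ℕ) = 1 := by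
  simp only [separates_iff_val, xor_def, ← Fin.val_ne_iff] at *
  split_ifs <;> omega

lemma isCrossing_pair_iff {n : ℕ} (π : Equiv.Perm (Fin n)) {a b c d : Fin n}
    (hac : a ≠ c) (had : a ≠ d) (hbc : b ≠ c) (hbd : b ≠ d) :
    IsCrossing π {s(a, b), s(c, d)} ↔ Separates (π a) (π b) (π c) (π d) := by
  refine ⟨fun ⟨a', b', c', d', hs, hx⟩ => ?_, fun h => ⟨a, b, c, d, rfl, h⟩⟩
  have map_eq {x y x' y' : Fin n} (h : s(x, y) = s(x', y')) : s(π x, π y) = s(π x', π y') := by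
    simpa using congrArg (Sym2.map π) h
  rw [← Finset.coe_inj, Finset.coe_pair, Finset.coe_pair, Set.pair_eq_pair_iff] at hs
  rcases hs with ⟨hab, hcd⟩ | ⟨hab, hcd⟩
  · exact (separates_congr (map_eq hab) (map_eq hcd)).mpr hx
  · rw [separates_comm (π.injective.ne hac) (π.injective.ne had) (π.injective.ne hbc)
      (π.injective.ne hbd)]
    exact (separates_congr (map_eq hcd) (map_eq hab)).mpr hx

lemma exists_eq_pair_of_mem_matchings_two {n : ℕ} {G : SimpleGraph (Fin n)} [DecidableRel G.Adj]
    {s : Finset (Sym2 (Fin n))} (hs : s ∈ matchings G 2) :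
    ∃ a b c d : Fin n, s = {s(a, b), s(c, d)} ∧
      a ≠ b ∧ a ≠ c ∧ a ≠ d ∧ b ≠ c ∧ b ≠ d ∧ c ≠ d := by
  simp only [matchings, mem_filter, mem_powersetCard] at hs
  obtain ⟨⟨hsub, hcard⟩, hdisj⟩ := hs
  obtain ⟨e, f, hef, rfl⟩ := card_eq_two.mp hcard
  induction e using Sym2.ind with | _ a b =>
  induction f using Sym2.ind with | _ c d =>
  have hab : G.Adj a b := G.mem_edgeFinset.mp (hsub (mem_insert_self _ _))
  have hcd : G.Adj c d := G.mem_edgeFinset.mp (hsub (mem_insert_of_mem (mem_singleton_self _)))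
  have hdisj' (v : Fin n) (hv : v ∈ s(a, b)) : v ∉ s(c, d) := fun hv' =>
    hdisj _ (mem_insert_self _ _) _ (mem_insert_of_mem (mem_singleton_self _)) hef v ⟨hv, hv'⟩
  have ha := hdisj' a (Sym2.mem_mk_left a b)
  have hb := hdisj' b (Sym2.mem_mk_right a b)
  simp only [Sym2.mem_iff, not_or] at ha hb
  exact ⟨a, b, c, d, rfl, hab.ne, ha.1, ha.2, hb.1, hb.2, hcd.ne⟩

lemma mul_card_filter_eq_card_of_forall_sum_eq_one {G : Type*} [Group G] [Fintype G]
    (P : G → Prop) [DecidablePred P] (σ : G) (k : ℕ)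
    (h : ∀ g, ∑ i ∈ range k, (if P (g * σ ^ i) then 1 else 0) = 1) :
    k * #{g | P g} = Fintype.card G :=
  calc k * #{g | P g} = ∑ i ∈ range k, #{g | P g} := by simp
    _ = ∑ i ∈ range k, ∑ g, if P (g * σ ^ i) then 1 else 0 := sum_congr rfl fun i _ => by
        rw [card_filter]; exact (Equiv.sum_comp (Equiv.mulRight (σ ^ i)) _).symm
    _ = ∑ g, ∑ i ∈ range k, if P (g * σ ^ i) then 1 else 0 := sum_comm
    _ = Fintype.card G := by simp [h]

lemma three_mul_card_isCrossing {n : ℕ} {a b c d : Fin n} (hab : a ≠ b) (hac : a ≠ c)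
    (had : a ≠ d) (hbc : b ≠ c) (hbd : b ≠ d) (hcd : c ≠ d) :
    3 * #{π : Equiv.Perm (Fin n) | IsCrossing π {s(a, b), s(c, d)}} =
      Fintype.card (Equiv.Perm (Fin n)) := by
  set σ : Equiv.Perm (Fin n) := Equiv.swap b c * Equiv.swap c d
  have hσa : σ a = a := by
    simp [σ, Equiv.swap_apply_of_ne_of_ne hac had, Equiv.swap_apply_of_ne_of_ne hab hac]
  have hσb : σ b = c := by simp [σ, Equiv.swap_apply_of_ne_of_ne hbc hbd]
  have hσc : σ c = d := by simp [σ, Equiv.swap_apply_of_ne_of_ne hbd.symm hcd.symm]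
  have hσd : σ d = b := by simp [σ]
  refine mul_card_filter_eq_card_of_forall_sum_eq_one _ σ 3 fun π => ?_
  simp only [sum_range_succ, sum_range_zero, zero_add, pow_zero, pow_one, pow_two,
    isCrossing_pair_iff _ hac had hbc hbd, Equiv.Perm.mul_apply, hσa, hσb, hσc, hσd]
  have hπ := π.injective
  exact separates_trichotomy (hπ.ne hab) (hπ.ne hac) (hπ.ne had) (hπ.ne hbc) (hπ.ne hbd)
    (hπ.ne hcd)

lemma three_mul_sum_crossingNumber {n : ℕ} (G : SimpleGraph (Fin n)) [DecidableRel G.Adj] :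
    3 * ∑ π : Equiv.Perm (Fin n), crossingNumber G π =
      mMatch G 2 * Fintype.card (Equiv.Perm (Fin n)) :=
  calc 3 * ∑ π : Equiv.Perm (Fin n), crossingNumber G π
      = ∑ s ∈ matchings G 2, 3 * #{π : Equiv.Perm (Fin n) | IsCrossing π s} := by
        rw [← mul_sum]
        exact congrArg _ (sum_card_bipartiteAbove_eq_sum_card_bipartiteBelow _)
    _ = ∑ s ∈ matchings G 2, Fintype.card (Equiv.Perm (Fin n)) := sum_congr rfl fun s hs => by
        obtain ⟨a, b, c, d, rfl, hab, hac, had, hbc, hbd, hcd⟩ :=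
          exists_eq_pair_of_mem_matchings_two hs
        exact three_mul_card_isCrossing hab hac had hbc hbd hcd
    _ = mMatch G 2 * Fintype.card (Equiv.Perm (Fin n)) := by rw [sum_const, smul_eq_mul, mMatch]

/-- The expected number of crossings of a uniformly random embedding of `G`
equals one third of the number of 2-matchings of `G`. -/
theorem mean_crossings (n : ℕ) (G : SimpleGraph (Fin n)) [DecidableRel G.Adj] :
    meanX G = (mMatch G 2 : ℝ) / 3 := by
  have hN : (Fintype.card (Equiv.Perm (Fin n)) : ℝ) ≠ 0 :=
    Nat.cast_ne_zero.mpr Fintype.card_ne_zero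
  rw [meanX, expect, div_eq_div_iff hN three_ne_zero, ← Nat.cast_sum, mul_comm]
  exact_mod_cast three_mul_sum_crossingNumber G

end RandomCrossings
end

section
/- Let G_n (n ≥ 4) be the graph on n vertices obtained from a star graph with n−1 vertices (center v_0 and leaves v_1, …, v_{n−2}) by attaching an extra edge {v_{n−2}, v_{n−1}} at one of the leaves, so that G_n has n vertices in total. Let X_n be the number of crossings of a uniformly random embedding of G_n. Then for every integer k with 0 ≤ k ≤ n−2, P(X_n = k) = 2(n−2−k)/((n−1)(n−2)). -/
open Finset

namespace RandomCrossings

/-- The star graph with center `0` joined to the leaves `1, …, n−2`, together with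
one additional edge `{n−2, n−1}` attached at the leaf `n−2`. -/
def kite (n : ℕ) : SimpleGraph (Fin n) where
  Adj v w := v ≠ w ∧
    (((v : ℕ) = 0 ∧ 1 ≤ (w : ℕ) ∧ (w : ℕ) ≤ n - 2) ∨
     ((w : ℕ) = 0 ∧ 1 ≤ (v : ℕ) ∧ (v : ℕ) ≤ n - 2) ∨
     ((v : ℕ) = n - 2 ∧ (w : ℕ) = n - 1) ∨
     ((w : ℕ) = n - 2 ∧ (v : ℕ) = n - 1))
  symm := ⟨fun v w h => ⟨h.1.symm, by rcases h with ⟨_, h⟩; tauto⟩⟩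
  loopless := ⟨fun v h => h.1 rfl⟩

instance (n : ℕ) : DecidableRel (kite n).Adj :=
  fun _ _ => inferInstanceAs (Decidable (_ ∧ _))

instance {a b : Prop} [Decidable a] [Decidable b] : Decidable (Xor' a b) :=
  inferInstanceAs (Decidable (Xor a b))


def Fnat (n x u w : ℕ) : ℕ :=
  if min u w < x ∧ x < max u w then n - 1 - (max u w - min u w) else max u w - min u w - 1

lemma countC {n x u w : ℕ} (hx : x < n) (hu : u < n) (hw : w < n)
    (hxu : x ≠ u) (hxw : x ≠ w) (huw : u ≠ w) :
    ((range n).filter (fun y => y ≠ x ∧ y ≠ u ∧ y ≠ w ∧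
      Xor' (min x y < u ∧ u < max x y) (min x y < w ∧ w < max x y))).card
      = Fnat n x u w := by
  unfold Fnat
  by_cases hin : min u w < x ∧ x < max u w
  · rw [if_pos hin]
    have hset : (range n).filter (fun y => y ≠ x ∧ y ≠ u ∧ y ≠ w ∧
        Xor' (min x y < u ∧ u < max x y) (min x y < w ∧ w < max x y))
        = Finset.Iio (min u w) ∪ Finset.Ioo (max u w) n := by
      ext y
      simp only [mem_filter, mem_range, mem_union, mem_Iio, mem_Ioo]
      simp only [Xor', Xor]
      omega
    rw [hset, Finset.card_union_of_disjoint, Nat.card_Iio, Nat.card_Ioo]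
    · omega
    · rw [Finset.disjoint_left]
      intro a ha hb
      simp only [mem_Iio] at ha
      simp only [mem_Ioo] at hb
      omega
  · rw [if_neg hin]
    have hset : (range n).filter (fun y => y ≠ x ∧ y ≠ u ∧ y ≠ w ∧
        Xor' (min x y < u ∧ u < max x y) (min x y < w ∧ w < max x y))
        = Finset.Ioo (min u w) (max u w) := by
      ext y
      simp only [mem_filter, mem_range, mem_Ioo]
      simp only [Xor', Xor]
      omega
    rw [hset, Nat.card_Ioo]

lemma countX {n u w k : ℕ} (hn : 4 ≤ n) (hu : u < n) (hw : w < n) (huw : u ≠ w) (hk : k ≤ n - 2) :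
    ((range n).filter (fun x => (x ≠ u ∧ x ≠ w ∧ u ≠ w) ∧ Fnat n x u w = k)).card
      = (if max u w - min u w = n - 1 - k then n - 2 - k else 0)
      + (if max u w - min u w = k + 1 then n - 2 - k else 0) := by
  have hmem : ∀ x, ((x ≠ u ∧ x ≠ w ∧ u ≠ w) ∧ Fnat n x u w = k) ↔
      ((min u w < x ∧ x < max u w) ∧ n - 1 - (max u w - min u w) = k) ∨
      ((x ≠ u ∧ x ≠ w ∧ ¬(min u w < x ∧ x < max u w)) ∧ max u w - min u w - 1 = k) := by
    intro x
    simp only [Fnat, ite_eq_iff]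
    omega
  by_cases hA : max u w - min u w = n - 1 - k <;> by_cases hB : max u w - min u w = k + 1
  · rw [if_pos hA, if_pos hB]
    have hset : (range n).filter (fun x => (x ≠ u ∧ x ≠ w ∧ u ≠ w) ∧ Fnat n x u w = k)
        = (Finset.Iio (min u w) ∪ Finset.Ioo (max u w) n) ∪ Finset.Ioo (min u w) (max u w) := by
      ext x
      simp only [mem_filter, mem_range, mem_union, mem_Iio, mem_Ioo, hmem]
      omega
    rw [hset, Finset.card_union_of_disjoint, Finset.card_union_of_disjoint, Nat.card_Iio,
      Nat.card_Ioo, Nat.card_Ioo]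
    · omega
    · rw [Finset.disjoint_left]; intro a ha hb
      simp only [mem_Iio] at ha; simp only [mem_Ioo] at hb; omega
    · rw [Finset.disjoint_left]; intro a ha hb
      simp only [mem_union, mem_Iio, mem_Ioo] at ha; simp only [mem_Ioo] at hb; omega
  · rw [if_pos hA, if_neg hB]
    have hset : (range n).filter (fun x => (x ≠ u ∧ x ≠ w ∧ u ≠ w) ∧ Fnat n x u w = k)
        = Finset.Ioo (min u w) (max u w) := by
      ext x
      simp only [mem_filter, mem_range, mem_Ioo, hmem]
      omega
    rw [hset, Nat.card_Ioo]; omega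
  · rw [if_neg hA, if_pos hB]
    have hset : (range n).filter (fun x => (x ≠ u ∧ x ≠ w ∧ u ≠ w) ∧ Fnat n x u w = k)
        = Finset.Iio (min u w) ∪ Finset.Ioo (max u w) n := by
      ext x
      simp only [mem_filter, mem_range, mem_union, mem_Iio, mem_Ioo, hmem]
      omega
    rw [hset, Finset.card_union_of_disjoint, Nat.card_Iio, Nat.card_Ioo]
    · omega
    · rw [Finset.disjoint_left]; intro a ha hb
      simp only [mem_Iio] at ha; simp only [mem_Ioo] at hb; omega
  · rw [if_neg hA, if_neg hB]
    have hset : (range n).filter (fun x => (x ≠ u ∧ x ≠ w ∧ u ≠ w) ∧ Fnat n x u w = k) = ∅ := by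
      ext x
      simp only [mem_filter, mem_range, hmem, Finset.notMem_empty, iff_false]
      omega
    rw [hset, Finset.card_empty]

lemma sumshift {u c D n : ℕ} (hu : u < n) :
    (∑ w ∈ range n, if w + D = u then c else 0) = if D ≤ u then c else 0 := by
  by_cases hDu : D ≤ u
  · rw [if_pos hDu]
    have : ∀ w ∈ range n, (if w + D = u then c else 0) = if w = u - D then c else 0 := by
      intro w _
      congr 1
      simp only [eq_iff_iff]
      omega
    rw [Finset.sum_congr rfl this, Finset.sum_ite_eq' (range n) (u - D) (fun _ => c),
      if_pos (by simp only [mem_range]; omega)]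
  · rw [if_neg hDu]
    apply Finset.sum_eq_zero
    intro w _
    rw [if_neg (by omega)]

lemma sumW {n u k : ℕ} (hn : 4 ≤ n) (hu : u < n) (hk : k ≤ n - 2) :
    (∑ w ∈ range n,
      ((range n).filter (fun x => (x ≠ u ∧ x ≠ w ∧ u ≠ w) ∧ Fnat n x u w = k)).card)
      = 2 * (n - 2 - k) := by
  have hpt : ∀ w ∈ range n,
      ((range n).filter (fun x => (x ≠ u ∧ x ≠ w ∧ u ≠ w) ∧ Fnat n x u w = k)).card
      = (if w = u + (n - 1 - k) then n - 2 - k else 0)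
        + ((if w + (n - 1 - k) = u then n - 2 - k else 0)
        + ((if w = u + (k + 1) then n - 2 - k else 0)
        + (if w + (k + 1) = u then n - 2 - k else 0))) := by
    intro w hw
    rw [mem_range] at hw
    by_cases huw : u = w
    · have : (range n).filter (fun x => (x ≠ u ∧ x ≠ w ∧ u ≠ w) ∧ Fnat n x u w = k) = ∅ := by
        ext x
        simp only [mem_filter, Finset.notMem_empty, iff_false]
        tauto
      rw [this, Finset.card_empty]
      split_ifs <;> omega
    · rw [countX hn hu hw huw hk]
      split_ifs <;> omega
  rw [Finset.sum_congr rfl hpt, Finset.sum_add_distrib,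
    Finset.sum_ite_eq' (range n) (u + (n - 1 - k)) (fun _ => n - 2 - k),
    Finset.sum_add_distrib, sumshift hu, Finset.sum_add_distrib,
    Finset.sum_ite_eq' (range n) (u + (k + 1)) (fun _ => n - 2 - k), sumshift hu]
  simp only [mem_range]
  split_ifs <;> omega

lemma countT {n k : ℕ} (hn : 4 ≤ n) (hk : k ≤ n - 2) :
    ((range n ×ˢ (range n ×ˢ range n)).filter
      (fun t : ℕ × ℕ × ℕ =>
        (t.1 ≠ t.2.1 ∧ t.1 ≠ t.2.2 ∧ t.2.1 ≠ t.2.2) ∧ Fnat n t.1 t.2.1 t.2.2 = k)).card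
      = 2 * n * (n - 2 - k) := by
  rw [Finset.card_eq_sum_card_fiberwise
    (f := fun t : ℕ × ℕ × ℕ => t.2) (t := range n ×ˢ range n)
    (by intro t ht
        simp only [Finset.mem_coe, mem_filter, Finset.mem_product] at ht ⊢
        exact ⟨ht.1.2.1, ht.1.2.2⟩)]
  have hfib : ∀ p ∈ range n ×ˢ range n,
      (((range n ×ˢ (range n ×ˢ range n)).filter
        (fun t : ℕ × ℕ × ℕ =>
          (t.1 ≠ t.2.1 ∧ t.1 ≠ t.2.2 ∧ t.2.1 ≠ t.2.2) ∧ Fnat n t.1 t.2.1 t.2.2 = k)).filter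
        (fun t => t.2 = p)).card
      = ((range n).filter
          (fun x => (x ≠ p.1 ∧ x ≠ p.2 ∧ p.1 ≠ p.2) ∧ Fnat n x p.1 p.2 = k)).card := by
    intro p hp
    rw [Finset.mem_product] at hp
    apply Finset.card_bij (fun t _ => t.1)
    · intro t ht
      simp only [mem_filter, Finset.mem_product] at ht ⊢
      obtain ⟨⟨htm, hc⟩, hteq⟩ := ht
      subst hteq
      exact ⟨htm.1, hc⟩
    · intro t1 h1 t2 h2 heq
      simp only [mem_filter] at h1 h2
      exact Prod.ext heq (h1.2.trans h2.2.symm)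
    · intro x hx
      simp only [mem_filter, mem_range] at hx
      refine ⟨(x, p), ?_, rfl⟩
      simp only [mem_filter, Finset.mem_product, mem_range]
      exact ⟨⟨⟨hx.1, mem_range.mp hp.1, mem_range.mp hp.2⟩, hx.2⟩, trivial⟩
  rw [Finset.sum_congr rfl hfib, Finset.sum_product]
  have : ∀ u ∈ range n,
      (∑ w ∈ range n, ((range n).filter
        (fun x => (x ≠ u ∧ x ≠ w ∧ u ≠ w) ∧ Fnat n x u w = k)).card) = 2 * (n - 2 - k) := by
    intro u hu
    exact sumW hn (mem_range.mp hu) hk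
  rw [Finset.sum_congr rfl this, Finset.sum_const, Finset.card_range, smul_eq_mul]
  ring

def tEquiv {α : Type*} [DecidableEq α] (a b c x y v : α)
    (hab : a ≠ b) (hac : a ≠ c) (hbc : b ≠ c)
    (hxy : x ≠ y) (hxv : x ≠ v) (hyv : y ≠ v) :
    ({a, b, c} : Set α) ≃ ({x, y, v} : Set α) where
  toFun w := ⟨if (w : α) = a then x else if (w : α) = b then y else v, by
    split_ifs <;> simp⟩
  invFun w := ⟨if (w : α) = x then a else if (w : α) = y then b else c, by
    split_ifs <;> simp⟩
  left_inv := by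
    rintro ⟨w, hw⟩
    rcases hw with rfl | rfl | rfl <;>
      simp [hab, hac, hbc, hxy, hxv, hyv, hab.symm, hac.symm, hbc.symm,
        hxy.symm, hxv.symm, hyv.symm]
  right_inv := by
    rintro ⟨w, hw⟩
    rcases hw with rfl | rfl | rfl <;>
      simp [hab, hac, hbc, hxy, hxv, hyv, hab.symm, hac.symm, hbc.symm,
        hxy.symm, hxv.symm, hyv.symm]

lemma tEquiv_a {α : Type*} [DecidableEq α] (a b c x y v : α)
    (hab : a ≠ b) (hac : a ≠ c) (hbc : b ≠ c)
    (hxy : x ≠ y) (hxv : x ≠ v) (hyv : y ≠ v) (h : a ∈ ({a, b, c} : Set α)) :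
    (tEquiv a b c x y v hab hac hbc hxy hxv hyv ⟨a, h⟩ : α) = x := by
  simp [tEquiv]

lemma tEquiv_b {α : Type*} [DecidableEq α] (a b c x y v : α)
    (hab : a ≠ b) (hac : a ≠ c) (hbc : b ≠ c)
    (hxy : x ≠ y) (hxv : x ≠ v) (hyv : y ≠ v) (h : b ∈ ({a, b, c} : Set α)) :
    (tEquiv a b c x y v hab hac hbc hxy hxv hyv ⟨b, h⟩ : α) = y := by
  simp [tEquiv, hab.symm]

lemma tEquiv_c {α : Type*} [DecidableEq α] (a b c x y v : α)
    (hab : a ≠ b) (hac : a ≠ c) (hbc : b ≠ c)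
    (hxy : x ≠ y) (hxv : x ≠ v) (hyv : y ≠ v) (h : c ∈ ({a, b, c} : Set α)) :
    (tEquiv a b c x y v hab hac hbc hxy hxv hyv ⟨c, h⟩ : α) = v := by
  simp [tEquiv, hac.symm, hbc.symm]

lemma fiber_card {α : Type*} [DecidableEq α] [Fintype α] {a b c x y v : α}
    (hab : a ≠ b) (hac : a ≠ c) (hbc : b ≠ c)
    (hxy : x ≠ y) (hxv : x ≠ v) (hyv : y ≠ v) :
    (Finset.univ.filter (fun π : Equiv.Perm α => π a = x ∧ π b = y ∧ π c = v)).card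
      = (Fintype.card α - 3).factorial := by
  classical
  set e := tEquiv a b c x y v hab hac hbc hxy hxv hyv with he
  have hiff : ∀ π : Equiv.Perm α,
      (π a = x ∧ π b = y ∧ π c = v) ↔ ∀ w : ({a, b, c} : Set α), π w = (e w : α) := by
    intro π
    constructor
    · rintro ⟨h1, h2, h3⟩ ⟨w, hw⟩
      have hw' := hw
      simp only [Set.mem_insert_iff, Set.mem_singleton_iff] at hw'
      rcases hw' with rfl | rfl | rfl
      · rw [he, tEquiv_a]; exact h1
      · rw [he, tEquiv_b]; exact h2
      · rw [he, tEquiv_c]; exact h3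
    · intro h
      refine ⟨?_, ?_, ?_⟩
      · have := h ⟨a, by simp⟩
        rwa [he, tEquiv_a] at this
      · have := h ⟨b, by simp⟩
        rwa [he, tEquiv_b] at this
      · have := h ⟨c, by simp⟩
        rwa [he, tEquiv_c] at this
  have h1 : (Finset.univ.filter (fun π : Equiv.Perm α => π a = x ∧ π b = y ∧ π c = v)).card
      = Fintype.card {π : α ≃ α // ∀ w : ({a, b, c} : Set α), π w = (e w : α)} := by
    rw [Fintype.card_subtype]
    apply Finset.card_bij (fun π _ => π)
    · intro π hπ
      simp only [mem_filter, Finset.mem_univ, true_and] at hπ ⊢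
      exact (hiff π).mp hπ
    · intro π1 _ π2 _ h
      exact h
    · intro π hπ
      simp only [mem_filter, Finset.mem_univ, true_and] at hπ
      exact ⟨π, by simp only [mem_filter, Finset.mem_univ, true_and]; exact (hiff π).mpr hπ, rfl⟩
  have hcards : Fintype.card ({a, b, c} : Set α) = 3 := by
    rw [← Set.toFinset_card]
    simp only [Set.toFinset_insert, Set.toFinset_singleton]
    rw [Finset.card_insert_of_notMem (by simp [hab, hac]),
      Finset.card_insert_of_notMem (by simp [hbc]), Finset.card_singleton]
  have hcardt : Fintype.card ({x, y, v} : Set α) = 3 := by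
    rw [← Set.toFinset_card]
    simp only [Set.toFinset_insert, Set.toFinset_singleton]
    rw [Finset.card_insert_of_notMem (by simp [hxy, hxv]),
      Finset.card_insert_of_notMem (by simp [hyv]), Finset.card_singleton]
  have hcc : Fintype.card (({a, b, c} : Set α)ᶜ : Set α) = Fintype.card α - 3 := by
    rw [Fintype.card_compl_set, hcards]
  have hct : Fintype.card (({x, y, v} : Set α)ᶜ : Set α) = Fintype.card α - 3 := by
    rw [Fintype.card_compl_set, hcardt]
  rw [h1, Fintype.card_congr (Equiv.Set.compl e),
    Fintype.card_equiv (Fintype.equivOfCardEq (hcc.trans hct.symm)), hcc]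
/-- `Btw` in terms of natural number values. -/
lemma btw_val {n : ℕ} (x y z : Fin n) :
    Btw x y z ↔ (min x.val y.val < z.val ∧ z.val < max x.val y.val) := Iff.rfl

lemma edge_class {n : ℕ} (hn : 4 ≤ n) {z c d : Fin n}
    (hz : z.val = 0) (hc : c.val = n - 2) (hd : d.val = n - 1) :
    ∀ e ∈ (kite n).edgeFinset,
      (∃ i : Fin n, 1 ≤ i.val ∧ i.val ≤ n - 2 ∧ e = Sym2.mk z i) ∨ e = Sym2.mk c d := by
  intro e he
  rw [SimpleGraph.mem_edgeFinset] at he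
  induction e with
  | _ v w =>
    rw [SimpleGraph.mem_edgeSet] at he
    obtain ⟨hne, hcase⟩ := he
    rcases hcase with ⟨h1, h2, h3⟩ | ⟨h1, h2, h3⟩ | ⟨h1, h2⟩ | ⟨h1, h2⟩
    · left
      have : v = z := Fin.ext (by omega)
      subst this
      exact ⟨w, h2, h3, rfl⟩
    · left
      have : w = z := Fin.ext (by omega)
      subst this
      exact ⟨v, h2, h3, Sym2.eq_swap⟩
    · right
      have hv : v = c := Fin.ext (by omega)
      have hw : w = d := Fin.ext (by omega)
      subst hv; subst hw; rfl
    · right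
      have hv : v = d := Fin.ext (by omega)
      have hw : w = c := Fin.ext (by omega)
      subst hv; subst hw; exact Sym2.eq_swap

lemma matchings_kite {n : ℕ} (hn : 4 ≤ n) {z c d : Fin n}
    (hz : z.val = 0) (hc : c.val = n - 2) (hd : d.val = n - 1) :
    matchings (kite n) 2 =
      (Finset.univ.filter (fun i : Fin n => 1 ≤ i.val ∧ i.val ≤ n - 3)).image
        (fun i => ({Sym2.mk z i, Sym2.mk c d} : Finset (Sym2 (Fin n)))) := by
  have hzc : z ≠ c := fun h => by have := congrArg Fin.val h; omega
  have hzd : z ≠ d := fun h => by have := congrArg Fin.val h; omega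
  have hcd : c ≠ d := fun h => by have := congrArg Fin.val h; omega
  ext s
  simp only [matchings, Finset.mem_filter, Finset.mem_powersetCard, Finset.mem_image,
    Finset.mem_univ, true_and]
  constructor
  · rintro ⟨⟨hsub, hcard⟩, hdisj⟩
    obtain ⟨e, f, hef, rfl⟩ := Finset.card_eq_two.mp hcard
    have hesub : e ∈ (kite n).edgeFinset := hsub (by simp)
    have hfsub : f ∈ (kite n).edgeFinset := hsub (by simp)
    have he' := edge_class hn hz hc hd e hesub
    have hf' := edge_class hn hz hc hd f hfsub
    rcases he' with ⟨i, hi1, hi2, rfl⟩ | rfl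
    · rcases hf' with ⟨j, hj1, hj2, rfl⟩ | rfl
      · exfalso
        exact hdisj _ (by simp) _ (by simp) hef z ⟨by simp, by simp⟩
      · have hic : i ≠ c := by
          intro h
          exact hdisj _ (by simp) _ (by simp) hef i
            ⟨by simp, by rw [Sym2.mem_iff]; left; exact h⟩
        have : i.val ≤ n - 3 := by
          have := fun h => hic (Fin.ext h)
          omega
        exact ⟨i, ⟨hi1, this⟩, rfl⟩
    · rcases hf' with ⟨j, hj1, hj2, rfl⟩ | rfl
      · have hjc : j ≠ c := by
          intro h
          exact hdisj _ (by simp) _ (by simp) hef j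
            ⟨by rw [Sym2.mem_iff]; left; exact h, by simp⟩
        have : j.val ≤ n - 3 := by
          have := fun h => hjc (Fin.ext h)
          omega
        exact ⟨j, ⟨hj1, this⟩, Finset.pair_comm _ _⟩
      · exact absurd rfl hef
  · rintro ⟨i, ⟨hi1, hi2⟩, rfl⟩
    have hiz : i ≠ z := fun h => by have := congrArg Fin.val h; omega
    have hic : i ≠ c := fun h => by have := congrArg Fin.val h; omega
    have hid : i ≠ d := fun h => by have := congrArg Fin.val h; omega
    have hne : Sym2.mk z i ≠ Sym2.mk c d := by
      rw [Ne, Sym2.eq_iff]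
      push_neg
      exact ⟨fun h => absurd h hzc, fun h => absurd h hzd⟩
    refine ⟨⟨?_, ?_⟩, ?_⟩
    · intro e hee
      rcases Finset.mem_insert.mp hee with rfl | he2
      · rw [SimpleGraph.mem_edgeFinset, SimpleGraph.mem_edgeSet]
        exact ⟨hiz.symm, Or.inl ⟨hz, by omega⟩⟩
      · rw [Finset.mem_singleton] at he2
        subst he2
        rw [SimpleGraph.mem_edgeFinset, SimpleGraph.mem_edgeSet]
        exact ⟨hcd, Or.inr (Or.inr (Or.inl ⟨hc, hd⟩))⟩
    · rw [Finset.card_insert_of_notMem (by simpa using hne), Finset.card_singleton]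
    · intro e hee f hff hef v hv
      rcases Finset.mem_insert.mp hee with rfl | he2 <;>
        rcases Finset.mem_insert.mp hff with rfl | hf2
      · exact hef rfl
      · rw [Finset.mem_singleton] at hf2
        subst hf2
        rcases Sym2.mem_iff.mp hv.1 with rfl | rfl <;>
          rcases Sym2.mem_iff.mp hv.2 with h | h
        · exact hzc h
        · exact hzd h
        · exact hic h
        · exact hid h
      · rw [Finset.mem_singleton] at he2
        subst he2
        rcases Sym2.mem_iff.mp hv.2 with rfl | rfl <;>
          rcases Sym2.mem_iff.mp hv.1 with h | h
        · exact hzc h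
        · exact hzd h
        · exact hic h
        · exact hid h
      · rw [Finset.mem_singleton] at he2 hf2
        subst he2; subst hf2
        exact hef rfl
lemma isCrossing_iff {n : ℕ} (π : Equiv.Perm (Fin n)) {z c d i : Fin n}
    (hzi : z ≠ i) (hzc : z ≠ c) (hzd : z ≠ d) (hic : i ≠ c) (hid : i ≠ d) (hcd : c ≠ d) :
    IsCrossing π ({Sym2.mk z i, Sym2.mk c d} : Finset (Sym2 (Fin n))) ↔
      Xor' (Btw (π z) (π i) (π c)) (Btw (π z) (π i) (π d)) := by
  have e1 : (π z).val ≠ (π i).val := fun h => hzi (π.injective (Fin.ext h))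
  have e2 : (π z).val ≠ (π c).val := fun h => hzc (π.injective (Fin.ext h))
  have e3 : (π z).val ≠ (π d).val := fun h => hzd (π.injective (Fin.ext h))
  have e4 : (π i).val ≠ (π c).val := fun h => hic (π.injective (Fin.ext h))
  have e5 : (π i).val ≠ (π d).val := fun h => hid (π.injective (Fin.ext h))
  have e6 : (π c).val ≠ (π d).val := fun h => hcd (π.injective (Fin.ext h))
  have hnecd : Sym2.mk z i ≠ Sym2.mk c d := by
    rw [Ne, Sym2.eq_iff]
    push_neg
    exact ⟨fun h => absurd h hzc, fun h => absurd h hzd⟩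
  constructor
  · rintro ⟨a, b, c', d', hset, hxor⟩
    have hab : Sym2.mk a b ∈ ({Sym2.mk z i, Sym2.mk c d} : Finset (Sym2 (Fin n))) := by
      rw [hset]; simp
    have hzi' : Sym2.mk z i ∈ ({Sym2.mk a b, Sym2.mk c' d'} : Finset (Sym2 (Fin n))) := by
      rw [← hset]; simp
    have hcd' : Sym2.mk c d ∈ ({Sym2.mk a b, Sym2.mk c' d'} : Finset (Sym2 (Fin n))) := by
      rw [← hset]; simp
    simp only [Finset.mem_insert, Finset.mem_singleton] at hab hzi' hcd'
    rcases hab with hab | hab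
    · have hcd'' : Sym2.mk c d = Sym2.mk c' d' := by
        rcases hcd' with h | h
        · exact absurd (h.trans hab).symm hnecd
        · exact h
      rcases Sym2.eq_iff.mp hab with ⟨rfl, rfl⟩ | ⟨rfl, rfl⟩ <;>
        rcases Sym2.eq_iff.mp hcd'' with ⟨rfl, rfl⟩ | ⟨rfl, rfl⟩ <;>
        · simp only [btw_val, Xor', Xor] at hxor ⊢
          omega
    · have hzi'' : Sym2.mk z i = Sym2.mk c' d' := by
        rcases hzi' with h | h
        · exact absurd (h.trans hab) hnecd
        · exact h
      rcases Sym2.eq_iff.mp hab.symm with ⟨rfl, rfl⟩ | ⟨rfl, rfl⟩ <;>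
        rcases Sym2.eq_iff.mp hzi'' with ⟨rfl, rfl⟩ | ⟨rfl, rfl⟩ <;>
        · simp only [btw_val, Xor', Xor] at hxor ⊢
          omega
  · intro h
    exact ⟨z, i, c, d, rfl, h⟩

lemma crossing_count {n : ℕ} (hn : 4 ≤ n) {z c d : Fin n}
    (hz : z.val = 0) (hc : c.val = n - 2) (hd : d.val = n - 1) (π : Equiv.Perm (Fin n)) :
    crossingNumber (kite n) π = Fnat n (π z).val (π c).val (π d).val := by
  have hzc : z ≠ c := fun h => by have := congrArg Fin.val h; omega
  have hzd : z ≠ d := fun h => by have := congrArg Fin.val h; omega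
  have hcd : c ≠ d := fun h => by have := congrArg Fin.val h; omega
  unfold crossingNumber
  rw [matchings_kite hn hz hc hd, Finset.filter_image]
  rw [Finset.card_image_of_injOn]
  swap
  · intro i hi j hj hij
    simp only [Finset.coe_filter, Finset.mem_univ, true_and, Set.mem_setOf_eq] at hi hj
    have hij' : ({Sym2.mk z i, Sym2.mk c d} : Finset (Sym2 (Fin n)))
        = {Sym2.mk z j, Sym2.mk c d} := hij
    have : Sym2.mk z i ∈ ({Sym2.mk z j, Sym2.mk c d} : Finset (Sym2 (Fin n))) := by
      rw [← hij']; simp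
    simp only [Finset.mem_insert, Finset.mem_singleton] at this
    rcases this with h | h
    · rcases Sym2.eq_iff.mp h with ⟨-, h2⟩ | ⟨h1, h2⟩
      · exact h2
      · rw [h2, h1]
    · rcases Sym2.eq_iff.mp h with ⟨h1, -⟩ | ⟨h1, -⟩
      · exact absurd (congrArg Fin.val h1) (by omega)
      · exact absurd (congrArg Fin.val h1) (by omega)
  have hcong : (Finset.univ.filter (fun i : Fin n => 1 ≤ i.val ∧ i.val ≤ n - 3)).filter
      (fun i => IsCrossing π ({Sym2.mk z i, Sym2.mk c d} : Finset (Sym2 (Fin n))))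
      = (Finset.univ.filter (fun i : Fin n => 1 ≤ i.val ∧ i.val ≤ n - 3)).filter
      (fun i => Xor' (Btw (π z) (π i) (π c)) (Btw (π z) (π i) (π d))) := by
    apply Finset.filter_congr
    intro i hi
    simp only [Finset.mem_filter, Finset.mem_univ, true_and] at hi
    have hzi : z ≠ i := fun h => by have := congrArg Fin.val h; omega
    have hic : i ≠ c := fun h => by have := congrArg Fin.val h; omega
    have hid : i ≠ d := fun h => by have := congrArg Fin.val h; omega
    exact isCrossing_iff π hzi hzc hzd hic hid hcd
  rw [hcong, ← countC (n := n) (x := (π z).val) (u := (π c).val) (w := (π d).val)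
    (π z).isLt (π c).isLt (π d).isLt
    (fun h => hzc (π.injective (Fin.ext h))) (fun h => hzd (π.injective (Fin.ext h)))
    (fun h => hcd (π.injective (Fin.ext h)))]
  apply Finset.card_nbij (fun i => (π i).val)
  · intro i hi
    simp only [Finset.mem_coe, Finset.mem_filter, Finset.mem_univ, true_and] at hi
    obtain ⟨⟨hi1, hi2⟩, hx⟩ := hi
    have hzi : z ≠ i := fun h => by have := congrArg Fin.val h; omega
    have hic : i ≠ c := fun h => by have := congrArg Fin.val h; omega
    have hid : i ≠ d := fun h => by have := congrArg Fin.val h; omega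
    simp only [Finset.mem_coe, Finset.mem_filter, Finset.mem_range]
    refine ⟨(π i).isLt, fun h => hzi (π.injective (Fin.ext h.symm)),
      fun h => hic (π.injective (Fin.ext h)), fun h => hid (π.injective (Fin.ext h)), ?_⟩
    simpa only [btw_val, Xor', Xor] using hx
  · intro i hi j hj hij
    exact π.injective (Fin.ext hij)
  · intro y hy
    simp only [Finset.coe_filter, Finset.mem_range, Set.mem_setOf_eq] at hy
    obtain ⟨hyn, hy1, hy2, hy3, hy4⟩ := hy
    rw [Set.mem_image]
    have h1 : (π (π.symm ⟨y, hyn⟩)).val = y := by simp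
    have hjz : π.symm ⟨y, hyn⟩ ≠ z := fun h => hy1 (by rw [h] at h1; omega)
    have hjc : π.symm ⟨y, hyn⟩ ≠ c := fun h => hy2 (by rw [h] at h1; omega)
    have hjd : π.symm ⟨y, hyn⟩ ≠ d := fun h => hy3 (by rw [h] at h1; omega)
    have hjzv : (π.symm ⟨y, hyn⟩).val ≠ 0 := fun h => hjz (Fin.ext (by omega))
    have hjcv : (π.symm ⟨y, hyn⟩).val ≠ n - 2 := fun h => hjc (Fin.ext (by omega))
    have hjdv : (π.symm ⟨y, hyn⟩).val ≠ n - 1 := fun h => hjd (Fin.ext (by omega))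
    have hlt := (π.symm ⟨y, hyn⟩).isLt
    refine ⟨π.symm ⟨y, hyn⟩, Finset.mem_coe.mpr ?_, h1⟩
    simp only [Finset.mem_filter, Finset.mem_univ, true_and]
    refine ⟨⟨by omega, by omega⟩, ?_⟩
    simp only [btw_val, Xor', h1]
    simpa only [Xor', Xor] using hy4
/-- Exact distribution of the number of crossings of a random embedding of the
star-with-a-tail graph `G_n`. -/
theorem prob_crossings_kite (n : ℕ) (hn : 4 ≤ n) (k : ℕ) (hk : k ≤ n - 2) :
    prob (fun π : Equiv.Perm (Fin n) => crossingNumber (kite n) π = k) =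
      2 * ((n : ℝ) - 2 - (k : ℝ)) / (((n : ℝ) - 1) * ((n : ℝ) - 2)) := by
  classical
  set z : Fin n := ⟨0, by omega⟩ with hzdef
  set c : Fin n := ⟨n - 2, by omega⟩ with hcdef
  set d : Fin n := ⟨n - 1, by omega⟩ with hddef
  have hz : z.val = 0 := rfl
  have hc : c.val = n - 2 := rfl
  have hd : d.val = n - 1 := rfl
  have hzc : z ≠ c := fun h => by have := congrArg Fin.val h; rw [hz, hc] at this; omega
  have hzd : z ≠ d := fun h => by have := congrArg Fin.val h; rw [hz, hd] at this; omega
  have hcd : c ≠ d := fun h => by have := congrArg Fin.val h; rw [hc, hd] at this; omega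
  set TF : Finset (Fin n × Fin n × Fin n) :=
    Finset.univ.filter (fun t => (t.1 ≠ t.2.1 ∧ t.1 ≠ t.2.2 ∧ t.2.1 ≠ t.2.2) ∧
      Fnat n t.1.val t.2.1.val t.2.2.val = k) with hTFdef
  have hA : Finset.univ.filter (fun π : Equiv.Perm (Fin n) => crossingNumber (kite n) π = k)
      = Finset.univ.filter
        (fun π : Equiv.Perm (Fin n) => Fnat n (π z).val (π c).val (π d).val = k) := by
    apply Finset.filter_congr
    intro π _
    rw [crossing_count hn hz hc hd π]
  have hmaps : ∀ π ∈ Finset.univ.filter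
      (fun π : Equiv.Perm (Fin n) => Fnat n (π z).val (π c).val (π d).val = k),
      (π z, π c, π d) ∈ TF := by
    intro π hπ
    simp only [Finset.mem_filter, Finset.mem_univ, true_and] at hπ
    rw [hTFdef, Finset.mem_filter]
    exact ⟨Finset.mem_univ _, ⟨fun h => hzc (π.injective h), fun h => hzd (π.injective h),
      fun h => hcd (π.injective h)⟩, hπ⟩
  have hfib : ∀ t ∈ TF,
      ((Finset.univ.filter
        (fun π : Equiv.Perm (Fin n) => Fnat n (π z).val (π c).val (π d).val = k)).filter
        (fun π => (π z, π c, π d) = t)).card = (n - 3).factorial := by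
    intro t ht
    simp only [hTFdef, Finset.mem_filter, Finset.mem_univ, true_and] at ht
    have hset : (Finset.univ.filter
        (fun π : Equiv.Perm (Fin n) => Fnat n (π z).val (π c).val (π d).val = k)).filter
        (fun π => (π z, π c, π d) = t)
        = Finset.univ.filter (fun π : Equiv.Perm (Fin n) =>
            π z = t.1 ∧ π c = t.2.1 ∧ π d = t.2.2) := by
      ext π
      simp only [Finset.mem_filter, Finset.mem_univ, true_and, Prod.ext_iff]
      constructor
      · rintro ⟨-, h1, h2, h3⟩
        exact ⟨h1, h2, h3⟩
      · rintro ⟨h1, h2, h3⟩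
        rw [h1, h2, h3]
        exact ⟨ht.2, rfl, rfl, rfl⟩
    rw [hset, fiber_card hzc hzd hcd ht.1.1 ht.1.2.1 ht.1.2.2, Fintype.card_fin]
  have hcardA : (Finset.univ.filter
      (fun π : Equiv.Perm (Fin n) => Fnat n (π z).val (π c).val (π d).val = k)).card
      = TF.card * (n - 3).factorial := by
    rw [Finset.card_eq_sum_card_fiberwise hmaps, Finset.sum_congr rfl hfib,
      Finset.sum_const, smul_eq_mul]
  have hTF : TF.card = 2 * n * (n - 2 - k) := by
    rw [← countT hn hk]
    apply Finset.card_nbij (fun t => (t.1.val, t.2.1.val, t.2.2.val))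
    · intro t ht
      simp only [hTFdef, Finset.mem_coe, Finset.mem_filter, Finset.mem_univ, true_and] at ht
      simp only [Finset.mem_coe, Finset.mem_filter, Finset.mem_product, Finset.mem_range]
      exact ⟨⟨t.1.isLt, t.2.1.isLt, t.2.2.isLt⟩,
        ⟨fun h => ht.1.1 (Fin.ext h), fun h => ht.1.2.1 (Fin.ext h),
          fun h => ht.1.2.2 (Fin.ext h)⟩, ht.2⟩
    · intro t1 _ t2 _ h
      simp only [Prod.mk.injEq] at h
      exact Prod.ext (Fin.ext h.1) (Prod.ext (Fin.ext h.2.1) (Fin.ext h.2.2))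
    · intro p hp
      have hp' : p ∈ (Finset.range n ×ˢ (Finset.range n ×ˢ Finset.range n)).filter
          (fun t : ℕ × ℕ × ℕ =>
            (t.1 ≠ t.2.1 ∧ t.1 ≠ t.2.2 ∧ t.2.1 ≠ t.2.2) ∧ Fnat n t.1 t.2.1 t.2.2 = k) :=
        Finset.mem_coe.mp hp
      rw [Finset.mem_filter, Finset.mem_product] at hp'
      obtain ⟨⟨h1, hmm⟩, ⟨hne1, hne2, hne3⟩, hF⟩ := hp'
      rw [Finset.mem_product] at hmm
      obtain ⟨h2, h3⟩ := hmm
      rw [Finset.mem_range] at h1 h2 h3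
      rw [Set.mem_image]
      refine ⟨(⟨p.1, h1⟩, ⟨p.2.1, h2⟩, ⟨p.2.2, h3⟩), Finset.mem_coe.mpr ?_, rfl⟩
      simp only [hTFdef, Finset.mem_filter, Finset.mem_univ, true_and]
      exact ⟨⟨fun h => hne1 (congrArg Fin.val h), fun h => hne2 (congrArg Fin.val h),
        fun h => hne3 (congrArg Fin.val h)⟩, hF⟩
  have hden : Fintype.card (Equiv.Perm (Fin n)) = n.factorial := by
    rw [Fintype.card_perm, Fintype.card_fin]
  have hfact : n.factorial = n * (n - 1) * (n - 2) * (n - 3).factorial := by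
    obtain ⟨m, rfl⟩ : ∃ m, n = m + 4 := ⟨n - 4, by omega⟩
    have h1 : m + 4 - 1 = m + 3 := by omega
    have h2 : m + 4 - 2 = m + 2 := by omega
    have h3 : m + 4 - 3 = m + 1 := by omega
    rw [h1, h2, h3]
    show (m + 3 + 1).factorial = _
    rw [Nat.factorial_succ]
    show _ = (m + 4) * (m + 3) * (m + 2) * (m + 1).factorial
    rw [show (m + 3).factorial = (m + 2 + 1).factorial from rfl, Nat.factorial_succ,
      show (m + 2).factorial = (m + 1 + 1).factorial from rfl, Nat.factorial_succ]
    ring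
  unfold prob
  rw [Finset.filter_congr_decidable, hA, hcardA, hTF, hden, hfact]
  have hsub : ((n - 2 - k : ℕ) : ℝ) = (n : ℝ) - 2 - (k : ℝ) := by
    have h1 : 2 + k ≤ n := by omega
    rw [Nat.sub_sub, Nat.cast_sub h1]
    push_cast
    ring
  have hn1 : (n : ℝ) - 1 ≠ 0 := by
    have : (4 : ℝ) ≤ (n : ℝ) := by exact_mod_cast hn
    nlinarith
  have hn2 : (n : ℝ) - 2 ≠ 0 := by
    have : (4 : ℝ) ≤ (n : ℝ) := by exact_mod_cast hn
    nlinarith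
  have hn0 : (n : ℝ) ≠ 0 := by
    have : (4 : ℝ) ≤ (n : ℝ) := by exact_mod_cast hn
    nlinarith
  have hfne : ((n - 3).factorial : ℝ) ≠ 0 := by
    exact_mod_cast Nat.factorial_ne_zero (n - 3)
  push_cast
  rw [Nat.cast_sub (by omega : 1 ≤ n), Nat.cast_sub (by omega : 2 ≤ n), hsub]
  push_cast
  field_simp
end RandomCrossings
end
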